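/- Let F : ℕ → ℂ be in standard semi-multiplicative form with threshold a_F and multiplicative part M_F. Let G : ℕ → ℂ be multiplicative with finitely many bad primes such that R_G(a) converges with R_G(a) = F(a) for all a ∈ ℕ. Then for every prime p and every v ≥ 1: G(p^{v_p(a_F)+v}) = H_G(p) + (1 − H_G(p))·G_{M_F}(p^v), where H_G is the opacity core of G and G_{M_F} is the canonical Ramanujan coefficient of M_F. -/

import Mathlib

/-!
Möbius inversion of Kluyver's formula shows that every Lucht series
`L_G(n, x) = ∑_{K ≤ x} μ(K) G(nK)` converges to `F'(n)/n`. Write `a_F = p^m b` with `p ∤ b`.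
Splitting off the `p`-part of `K` gives `L_G(b p^e, x) = G(p^e) T(x) - G(p^{e+1}) T(x/p)` for a
single function `T`. Either `G` is completely multiplicative at `p`; then the limits
`F'(b p^e)/(b p^e)` form a geometric progression, which forces `m = 0` and
`M_F'(p^K)/p^K = G(p)^K`, while `H_G(p) = G(p)`. Or `T` converges to some `τ ≠ 0`; then
`(G(p^e) - G(p^{e+1})) τ = F'(b p^e)/(b p^e)`, which vanishes for `e < m` and is proportional to
`M_F'(p^{e-m})/p^{e-m}` beyond, and telescoping gives the formula with `H_G(p) = G(p^{m+1})`.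
-/

open Filter Finset

noncomputable def mu (n : ℕ) : ℂ := ((ArithmeticFunction.moebius n : ℤ) : ℂ)

/-- Ramanujan sum `c_q(a) = ∑_{d ∣ gcd(q,a)} d · μ(q/d)` (Kluyver's formula). -/
noncomputable def cR (q a : ℕ) : ℂ :=
  ∑ d ∈ (Nat.gcd q a).divisors, (d : ℂ) * mu (q / d)

/-- Partial sum of the Ramanujan series `R_G(a,x) = ∑_{q ≤ x} G(q) c_q(a)`. -/
noncomputable def RS (G : ℕ → ℂ) (a : ℕ) (x : ℝ) : ℂ :=
  ∑ q ∈ Finset.Icc 1 ⌊x⌋₊, G q * cR q a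

/-- Partial sum of the coprime series `S_G(a,x) = ∑_{r ≤ x, (r,a)=1} G(r) μ(r)`. -/
noncomputable def SS (G : ℕ → ℂ) (a : ℕ) (x : ℝ) : ℂ :=
  ∑ r ∈ (Finset.Icc 1 ⌊x⌋₊).filter fun r => Nat.gcd r a = 1, G r * mu r

/-- Partial sum of the Lucht series `L_G(d,x) = ∑_{K ≤ x} μ(K) G(dK)`. -/
noncomputable def LS (G : ℕ → ℂ) (d : ℕ) (x : ℝ) : ℂ :=
  ∑ K ∈ Finset.Icc 1 ⌊x⌋₊, mu K * G (d * K)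

def RTendsto (G : ℕ → ℂ) (a : ℕ) (L : ℂ) : Prop :=
  Tendsto (fun x : ℝ => RS G a x) atTop (nhds L)

def RConv (G : ℕ → ℂ) (a : ℕ) : Prop := ∃ L, RTendsto G a L

def STendsto (G : ℕ → ℂ) (a : ℕ) (L : ℂ) : Prop :=
  Tendsto (fun x : ℝ => SS G a x) atTop (nhds L)

def SConv (G : ℕ → ℂ) (a : ℕ) : Prop := ∃ L, STendsto G a L

def LTendsto (G : ℕ → ℂ) (d : ℕ) (L : ℂ) : Prop :=
  Tendsto (fun x : ℝ => LS G d x) atTop (nhds L)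

def LConv (G : ℕ → ℂ) (d : ℕ) : Prop := ∃ L, LTendsto G d L

/-- `G` is multiplicative: `G(ab) = G(a)G(b)` for coprime positive `a, b`. -/
def IsMult (G : ℕ → ℂ) : Prop :=
  ∀ a b : ℕ, 0 < a → 0 < b → Nat.Coprime a b → G (a * b) = G a * G b

/-- `G` is completely multiplicative. -/
def IsCM (G : ℕ → ℂ) : Prop :=
  ∀ a b : ℕ, 0 < a → 0 < b → G (a * b) = G a * G b

/-- The completely multiplicative index `w_{p,G}`: the largest `w ∈ ℕ` with
`G(p^k) = G(p)^k` for all `1 ≤ k ≤ w`, and `⊤` if this holds for all `k`. -/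
noncomputable def cmIndex (G : ℕ → ℂ) (p : ℕ) : ℕ∞ :=
  ⨆ w ∈ {n : ℕ | ∀ k : ℕ, 1 ≤ k → k ≤ n → G (p ^ k) = G p ^ k}, (w : ℕ∞)

/-- The transparency index `v_{p,G}`: least `K ≥ 0` with `G(p^{K+1}) ≠ 1`, or `⊤`. -/
noncomputable def trIdx (G : ℕ → ℂ) (p : ℕ) : ℕ∞ :=
  ⨅ K ∈ {K : ℕ | G (p ^ (K + 1)) ≠ 1}, (K : ℕ∞)

/-- A prime `p` is bad for `G` iff `1 ≤ |G(p)| ≤ p`. -/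
def IsBad (G : ℕ → ℂ) (p : ℕ) : Prop :=
  1 ≤ ‖G p‖ ∧ ‖G p‖ ≤ p

def IsHyperbad (G : ℕ → ℂ) (p : ℕ) : Prop :=
  p.Prime ∧ IsBad G p ∧ cmIndex G p = ⊤

def IsSimplyBad (G : ℕ → ℂ) (p : ℕ) : Prop :=
  p.Prime ∧ IsBad G p ∧ cmIndex G p ≠ ⊤

def IsSimplyTransparent (G : ℕ → ℂ) (p : ℕ) : Prop :=
  p.Prime ∧ G p = 1 ∧ cmIndex G p ≠ ⊤

/-- The Ramanujan conductor `N(G) = ∏_{p simply bad} p^{w_{p,G}}`. -/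
noncomputable def ramCond (G : ℕ → ℂ) : ℕ :=
  ∏ᶠ p ∈ {p : ℕ | IsSimplyBad G p}, p ^ (cmIndex G p).toNat

/-- The transparency conductor `N_T(G) = ∏_{p simply transparent} p^{v_{p,G}}`. -/
noncomputable def transpCond (G : ℕ → ℂ) : ℕ :=
  ∏ᶠ p ∈ {p : ℕ | IsSimplyTransparent G p}, p ^ (trIdx G p).toNat

/-- The squarefree radical of `n`. -/
def rad (n : ℕ) : ℕ := ∏ p ∈ n.primeFactors, p

/-- Euler–Ramanujan factor `E_G(a) = ∑_{d ∣ a·rad a} G(d) c_d(a)`. -/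
noncomputable def EG (G : ℕ → ℂ) (a : ℕ) : ℂ := ∑ d ∈ (a * rad a).divisors, G d * cR d a

/-- `C_G(a) = ∑_{d ∣ a} G(d) μ(d)`. -/
noncomputable def CGsum (G : ℕ → ℂ) (a : ℕ) : ℂ := ∑ d ∈ a.divisors, G d * mu d

/-- `D_G(a) = ∑_{d ∣ a} G(d) d`. -/
noncomputable def DGsum (G : ℕ → ℂ) (a : ℕ) : ℂ := ∑ d ∈ a.divisors, G d * (d : ℂ)

/-- `U_G(a) = ∑_{d ∣ a} μ(d) G(da)`. -/
noncomputable def UGsum (G : ℕ → ℂ) (a : ℕ) : ℂ := ∑ d ∈ a.divisors, mu d * G (d * a)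

/-- Eratosthenes transform `F' = F ∗ μ`. -/
noncomputable def eratos (F : ℕ → ℂ) (n : ℕ) : ℂ := ∑ d ∈ n.divisors, F d * mu (n / d)

/-- The canonical Ramanujan coefficient of `F`:
`G_F(q) = ∏_{p ∣ q} (1 - ∑_{K=0}^{v_p(q)-1} F'(p^K)/p^K)`. -/
noncomputable def canonCoeff (F : ℕ → ℂ) (q : ℕ) : ℂ :=
  ∏ p ∈ q.primeFactors,
    (1 - ∑ K ∈ Finset.range (q.factorization p), eratos F (p ^ K) / ((p : ℂ) ^ K))

/-- The opacity core `H_G(q) = G(q·N_T(G))·μ(q)²`. -/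
noncomputable def opacityCore (G : ℕ → ℂ) (q : ℕ) : ℂ :=
  G (q * transpCond G) * mu q ^ 2

lemma mu_one : mu 1 = 1 := by simp [mu]

lemma mu_prime {p : ℕ} (hp : p.Prime) : mu p = -1 := by
  simp [mu, ArithmeticFunction.moebius_apply_prime hp]

lemma mu_prime_mul {p : ℕ} (hp : p.Prime) (K : ℕ) :
    mu (p * K) = if p ∣ K then 0 else -mu K := by
  split_ifs with hpK
  · have hsq : ¬ Squarefree (p * K) := fun h =>
      hp.one_lt.ne' (Nat.isUnit_iff.mp (h p (mul_dvd_mul_left p hpK)))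
    simp [mu, ArithmeticFunction.moebius_eq_zero_of_not_squarefree hsq]
  · rw [mu, ArithmeticFunction.isMultiplicative_moebius.map_mul_of_coprime
      (hp.coprime_iff_not_dvd.mpr hpK), ArithmeticFunction.moebius_apply_prime hp, mu]
    push_cast
    ring

lemma sum_Icc_filter_dvd {M : Type*} [AddCommMonoid M] (f : ℕ → M) {d : ℕ} (hd : 0 < d)
    (N : ℕ) : ∑ q ∈ (Icc 1 N).filter (d ∣ ·), f q = ∑ K ∈ Icc 1 (N / d), f (d * K) := by
  have himage : (Icc 1 N).filter (d ∣ ·) = (Icc 1 (N / d)).image (d * ·) := by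
    ext q
    simp only [mem_filter, mem_Icc, mem_image]
    constructor
    · rintro ⟨⟨hq1, hqN⟩, K, rfl⟩
      refine ⟨K, ⟨Nat.pos_of_mul_pos_left hq1, ?_⟩, rfl⟩
      rw [Nat.le_div_iff_mul_le hd, mul_comm]
      exact hqN
    · rintro ⟨K, ⟨hK1, hKN⟩, rfl⟩
      refine ⟨⟨Nat.mul_pos hd hK1, ?_⟩, dvd_mul_right d K⟩
      rw [Nat.le_div_iff_mul_le hd, mul_comm] at hKN
      exact hKN
  rw [himage, sum_image fun K _ K' _ h => Nat.eq_of_mul_eq_mul_left hd h]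

lemma RS_eq_sum_LS (G : ℕ → ℂ) {a : ℕ} (ha : 0 < a) (x : ℝ) :
    RS G a x = ∑ d ∈ a.divisors, (d : ℂ) * LS G d (x / d) := by
  have hswap : ∀ q d, q ∈ Icc 1 ⌊x⌋₊ ∧ d ∈ (Nat.gcd q a).divisors ↔
      q ∈ (Icc 1 ⌊x⌋₊).filter (d ∣ ·) ∧ d ∈ a.divisors := by
    intro q d
    simp only [Nat.mem_divisors, Nat.dvd_gcd_iff, mem_filter, ne_eq, Nat.gcd_eq_zero_iff,
      ha.ne', and_false, not_false_eq_true, and_true]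
    tauto
  simp only [RS, cR, mul_sum]
  rw [sum_comm' hswap]
  refine sum_congr rfl fun d hd => ?_
  rw [sum_Icc_filter_dvd _ (Nat.pos_of_mem_divisors hd), LS, Nat.floor_div_natCast, mul_sum]
  refine sum_congr rfl fun K _ => ?_
  rw [Nat.mul_div_cancel_left _ (Nat.pos_of_mem_divisors hd)]
  ring

lemma exists_ne_zero_of_RTendsto {G : ℕ → ℂ} {a : ℕ} {L : ℂ} (h : RTendsto G a L)
    (hL : L ≠ 0) : ∃ q, 0 < q ∧ G q ≠ 0 := by
  by_contra! hG
  have hRS : ∀ x, RS G a x = 0 := fun x =>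
    sum_eq_zero fun q hq => by rw [hG q (mem_Icc.mp hq).1, zero_mul]
  exact hL (tendsto_nhds_unique (h.congr hRS) tendsto_const_nhds)

/-- Möbius inversion of `RS_eq_sum_LS`. -/
lemma LTendsto_eratos {G F : ℕ → ℂ} (hconv : ∀ a : ℕ, 0 < a → RTendsto G a (F a))
    {n : ℕ} (hn : 0 < n) : LTendsto G n (eratos F n / n) := by
  have hinv : ∀ x : ℝ, (n : ℂ) * LS G n (x / n) = ∑ d ∈ n.divisors, RS G d x * mu (n / d) := by
    intro x
    have h := (ArithmeticFunction.sum_eq_iff_sum_mul_moebius_eq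
      (f := fun d => (d : ℂ) * LS G d (x / d)) (g := fun a => RS G a x)).mp
      (fun a ha => (RS_eq_sum_LS G ha x).symm) n hn
    rw [← h,
      Nat.sum_divisorsAntidiagonal' (f := fun i j => (ArithmeticFunction.moebius i : ℂ) * RS G j x)]
    exact sum_congr rfl fun d _ => mul_comm _ _
  have hlim : Tendsto (fun x : ℝ => (n : ℂ) * LS G n (x / n)) atTop (nhds (eratos F n)) := by
    simp only [hinv, eratos]
    exact tendsto_finsetSum _ fun d hd => (hconv d (Nat.pos_of_mem_divisors hd)).mul_const _
  have hn' : (0 : ℝ) < n := Nat.cast_pos.mpr hn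
  refine ((hlim.comp (tendsto_id.const_mul_atTop hn')).div_const (n : ℂ)).congr fun y => ?_
  have hnC : (n : ℂ) ≠ 0 := Nat.cast_ne_zero.mpr hn.ne'
  simp [Function.comp, mul_div_cancel_left₀ y hn'.ne', hnC]

lemma eratos_one (f : ℕ → ℂ) : eratos f 1 = f 1 := by
  simp [eratos, mu_one]

lemma eratos_of_shift {F M : ℕ → ℂ} {A : ℕ} {c : ℂ}
    (hF : ∀ a : ℕ, 0 < a → (A ∣ a → F a = c * M (a / A)) ∧ (¬ A ∣ a → F a = 0))
    (hA : 0 < A) {n : ℕ} (hn : 0 < n) :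
    eratos F n = if A ∣ n then c * eratos M (n / A) else 0 := by
  have hzero : ∀ d ∈ n.divisors, ¬ A ∣ d → F d * mu (n / d) = 0 := fun d hd hAd => by
    rw [(hF d (Nat.pos_of_mem_divisors hd)).2 hAd, zero_mul]
  split_ifs with hAn
  · obtain ⟨k, rfl⟩ := hAn
    have hk : 0 < k := Nat.pos_of_mul_pos_left hn
    have hsub : k.divisors.image (A * ·) ⊆ (A * k).divisors := fun d hd => by
      obtain ⟨d', hd', rfl⟩ := mem_image.mp hd
      exact Nat.mem_divisors.mpr ⟨mul_dvd_mul_left A (Nat.dvd_of_mem_divisors hd'), hn.ne'⟩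
    rw [eratos, eratos, Nat.mul_div_cancel_left _ hA, mul_sum, ← sum_subset hsub, sum_image]
    · refine sum_congr rfl fun d hd => ?_
      rw [(hF _ (Nat.mul_pos hA (Nat.pos_of_mem_divisors hd))).1 (dvd_mul_right A d),
        Nat.mul_div_cancel_left _ hA, Nat.mul_div_mul_left _ _ hA]
      ring
    · exact fun d _ d' _ h => Nat.eq_of_mul_eq_mul_left hA h
    · intro d hd hnot
      refine hzero d hd fun ⟨d', hd'⟩ => hnot (mem_image.mpr ⟨d', ?_, hd'.symm⟩)
      refine Nat.mem_divisors.mpr ⟨?_, hk.ne'⟩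
      exact (Nat.mul_dvd_mul_iff_left hA).mp (hd' ▸ Nat.dvd_of_mem_divisors hd)
  · exact sum_eq_zero fun d hd =>
      hzero d hd fun hAd => hAn (hAd.trans (Nat.dvd_of_mem_divisors hd))

lemma eratos_mul_prime_pow_of_shift {F M : ℕ → ℂ} {c : ℂ} {A p b m : ℕ} (hp : p.Prime)
    (hb : 0 < b) (hA : A = b * p ^ m)
    (hF : ∀ a : ℕ, 0 < a → (A ∣ a → F a = c * M (a / A)) ∧ (¬ A ∣ a → F a = 0))
    (e : ℕ) : eratos F (b * p ^ e) = if m ≤ e then c * eratos M (p ^ (e - m)) else 0 := by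
  subst hA
  rw [eratos_of_shift hF (Nat.mul_pos hb (pow_pos hp.pos m))
    (Nat.mul_pos hb (pow_pos hp.pos e))]
  have hdvd : b * p ^ m ∣ b * p ^ e ↔ m ≤ e := by
    rw [Nat.mul_dvd_mul_iff_left hb, Nat.pow_dvd_pow_iff_le_right hp.one_lt]
  by_cases hme : m ≤ e
  · rw [if_pos (hdvd.mpr hme), if_pos hme, ← Nat.add_sub_cancel' hme, pow_add, ← mul_assoc,
      Nat.mul_div_cancel_left _ (Nat.mul_pos hb (pow_pos hp.pos m)), Nat.add_sub_cancel_left]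
  · rw [if_neg (mt hdvd.mp hme), if_neg hme]

lemma eratos_div_mul_prime_pow_of_lt {F M : ℕ → ℂ} {c : ℂ} {A p b m : ℕ} (hp : p.Prime)
    (hb : 0 < b) (hA : A = b * p ^ m)
    (hF : ∀ a : ℕ, 0 < a → (A ∣ a → F a = c * M (a / A)) ∧ (¬ A ∣ a → F a = 0))
    {e : ℕ} (he : e < m) : eratos F (b * p ^ e) / (b * p ^ e : ℕ) = 0 := by
  rw [eratos_mul_prime_pow_of_shift hp hb hA hF, if_neg (by omega), zero_div]

lemma eratos_div_mul_prime_pow_add {F M : ℕ → ℂ} {c : ℂ} {A p b m : ℕ} (hp : p.Prime)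
    (hb : 0 < b) (hA : A = b * p ^ m)
    (hF : ∀ a : ℕ, 0 < a → (A ∣ a → F a = c * M (a / A)) ∧ (¬ A ∣ a → F a = 0))
    (K : ℕ) : eratos F (b * p ^ (m + K)) / (b * p ^ (m + K) : ℕ) =
      c / A * (eratos M (p ^ K) / (p : ℂ) ^ K) := by
  rw [eratos_mul_prime_pow_of_shift hp hb hA hF, if_pos (by omega), Nat.add_sub_cancel_left,
    div_mul_div_comm, hA]
  push_cast
  ring

lemma canonCoeff_prime_pow (f : ℕ → ℂ) {p : ℕ} (hp : p.Prime) (v : ℕ) :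
    canonCoeff f (p ^ v) = 1 - ∑ K ∈ range v, eratos f (p ^ K) / (p : ℂ) ^ K := by
  rcases Nat.eq_zero_or_pos v with rfl | hv
  · simp [canonCoeff]
  · rw [canonCoeff, Nat.primeFactors_prime_pow hv.ne' hp, prod_singleton,
      hp.factorization_pow, Finsupp.single_eq_same]

noncomputable def coprimeLS (G : ℕ → ℂ) (b p : ℕ) (x : ℝ) : ℂ :=
  ∑ K ∈ (Icc 1 ⌊x⌋₊).filter (fun K => ¬ p ∣ K), mu K * G (b * K)

section Multiplicative

variable {G : ℕ → ℂ}

lemma IsMult.map_one (hG : IsMult G) {n : ℕ} (hn : 0 < n) (hGn : G n ≠ 0) : G 1 = 1 := by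
  have h := hG n 1 hn one_pos (Nat.coprime_one_right n)
  rw [mul_one] at h
  exact (mul_eq_left₀ hGn).mp h.symm

lemma IsMult.map_prime_pow_mul (hG : IsMult G) {p b : ℕ} (hp : p.Prime) (hb : 0 < b)
    (hpb : ¬ p ∣ b) (j : ℕ) : G (p ^ j * b) = G (p ^ j) * G b :=
  hG _ _ (pow_pos hp.pos j) hb (Nat.Coprime.pow_left j (hp.coprime_iff_not_dvd.mpr hpb))

lemma IsMult.map_prod_prime_pow (hG : IsMult G) (hG1 : G 1 = 1) (f : ℕ → ℕ) {s : Finset ℕ}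
    (hs : ∀ q ∈ s, q.Prime) : G (∏ q ∈ s, q ^ f q) = ∏ q ∈ s, G (q ^ f q) := by
  classical
  induction s using Finset.induction_on with
  | empty => simpa using hG1
  | insert a s ha ih =>
    have hs' : ∀ q ∈ s, q.Prime := fun q hq => hs q (mem_insert_of_mem hq)
    have hcop : Nat.Coprime (a ^ f a) (∏ q ∈ s, q ^ f q) :=
      Nat.Coprime.prod_right fun q hq => Nat.Coprime.pow _ _
        ((Nat.coprime_primes (hs a (mem_insert_self a s)) (hs' q hq)).mpr
          fun h => ha (h ▸ hq))
    rw [prod_insert ha, prod_insert ha,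
      hG _ _ (pow_pos (hs a (mem_insert_self a s)).pos _)
        (prod_pos fun q hq => pow_pos (hs' q hq).pos _) hcop, ih hs']

lemma LS_mul_prime_pow (hG : IsMult G) {p b : ℕ} (hp : p.Prime) (hb : 0 < b) (hpb : ¬ p ∣ b)
    (e : ℕ) (x : ℝ) :
    LS G (b * p ^ e) x =
      G (p ^ e) * coprimeLS G b p x - G (p ^ (e + 1)) * coprimeLS G b p (x / p) := by
  have hsplit : ∀ j K, 0 < K → ¬ p ∣ K → G (b * p ^ j * K) = G (p ^ j) * G (b * K) :=
    fun j K hK hpK => by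
      rw [show b * p ^ j * K = p ^ j * (b * K) by ring]
      exact hG.map_prime_pow_mul hp (Nat.mul_pos hb hK)
        (fun h => (hp.dvd_mul.mp h).elim hpb hpK) j
  have hcoprime : ∑ K ∈ (Icc 1 ⌊x⌋₊).filter (fun K => ¬ p ∣ K), mu K * G (b * p ^ e * K)
      = G (p ^ e) * coprimeLS G b p x := by
    rw [coprimeLS, mul_sum]
    refine sum_congr rfl fun K hK => ?_
    simp only [mem_filter, mem_Icc] at hK
    rw [hsplit e K (by omega) hK.2]
    ring
  have hmultiple : ∑ K ∈ (Icc 1 ⌊x⌋₊).filter (p ∣ ·), mu K * G (b * p ^ e * K)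
      = -(G (p ^ (e + 1)) * coprimeLS G b p (x / p)) := by
    rw [sum_Icc_filter_dvd _ hp.pos, coprimeLS, Nat.floor_div_natCast, sum_filter, mul_sum,
      ← sum_neg_distrib]
    refine sum_congr rfl fun K hK => ?_
    rw [mu_prime_mul hp]
    split_ifs with hpK
    · simp
    · rw [show b * p ^ e * (p * K) = b * p ^ (e + 1) * K by ring,
        hsplit (e + 1) K (mem_Icc.mp hK).1 hpK]
      ring
  rw [LS, ← sum_filter_not_add_sum_filter _ (p ∣ ·), hcoprime, hmultiple]
  ring

end Multiplicative

section Transparency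

variable {G : ℕ → ℂ} {p : ℕ}

lemma cmIndex_eq_top (h : ∀ k : ℕ, G (p ^ k) = G p ^ k) : cmIndex G p = ⊤ :=
  eq_top_iff.mpr <| ENat.iSup_natCast ▸ iSup_le fun w =>
    le_iSup₂ (f := fun (w : ℕ) (_ : w ∈ _) => (w : ℕ∞)) w fun k _ _ => h k

lemma cmIndex_ne_top {k : ℕ} (hk : 1 ≤ k) (h : G (p ^ k) ≠ G p ^ k) : cmIndex G p ≠ ⊤ :=
  ne_top_of_le_ne_top (ENat.natCast_ne_top (k - 1)) <| iSup₂_le fun n hn =>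
    Nat.cast_le.mpr (by by_contra hlt; exact h (hn k hk (by omega)))

lemma trIdx_eq {t : ℕ} (hone : ∀ k : ℕ, 1 ≤ k → k ≤ t → G (p ^ k) = 1)
    (hne : G (p ^ (t + 1)) ≠ 1) : trIdx G p = t :=
  le_antisymm (iInf₂_le t hne) <| le_iInf₂ fun K hK =>
    Nat.cast_le.mpr (by by_contra hlt; exact hK (hone (K + 1) (by omega) (by omega)))

lemma map_pow_trIdx_toNat (hG1 : G 1 = 1) : G (p ^ (trIdx G p).toNat) = 1 := by
  induction h : trIdx G p using ENat.recTopCoe with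
  | top => simp [hG1]
  | coe t =>
    rcases t with _ | t
    · simp [hG1]
    rw [ENat.toNat_natCast]
    by_contra hne
    have hle : trIdx G p ≤ t := iInf₂_le t hne
    rw [h, Nat.cast_le] at hle
    omega

lemma exists_transpCond_eq (hG : IsMult G) (hG1 : G 1 = 1)
    (hfin : {p : ℕ | p.Prime ∧ IsBad G p}.Finite) (hp : p.Prime) :
    ∃ N, 0 < N ∧ ¬ p ∣ N ∧ G N = 1 ∧
      (IsSimplyTransparent G p → transpCond G = p ^ (trIdx G p).toNat * N) ∧
      (¬ IsSimplyTransparent G p → transpCond G = N) := by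
  have hsub : {q : ℕ | IsSimplyTransparent G q} ⊆ {q : ℕ | q.Prime ∧ IsBad G q} :=
    fun q ⟨hq, hGq, _⟩ => ⟨hq, by simp [IsBad, hGq, hq.one_lt.le]⟩
  set S := (hfin.subset hsub).toFinset
  have hS : ∀ q, q ∈ S ↔ IsSimplyTransparent G q := fun q => (hfin.subset hsub).mem_toFinset
  have hprime : ∀ q ∈ S.erase p, q.Prime := fun q hq => ((hS q).mp (mem_of_mem_erase hq)).1
  have hT : transpCond G = ∏ q ∈ S, q ^ (trIdx G q).toNat :=
    finprod_mem_eq_finite_toFinset_prod _ (hfin.subset hsub)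
  refine ⟨∏ q ∈ S.erase p, q ^ (trIdx G q).toNat,
    prod_pos fun q hq => pow_pos (hprime q hq).pos _, ?_, ?_, fun hst => ?_, fun hst => ?_⟩
  · refine (hp.coprime_iff_not_dvd).mp (Nat.Coprime.prod_right fun q hq => ?_)
    exact Nat.Coprime.pow_right _
      ((Nat.coprime_primes hp (hprime q hq)).mpr (ne_of_mem_erase hq).symm)
  · rw [hG.map_prod_prime_pow hG1 _ hprime]
    exact prod_eq_one fun q _ => map_pow_trIdx_toNat hG1
  · rw [hT, mul_prod_erase S (fun q => q ^ (trIdx G q).toNat) ((hS p).mpr hst)]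
  · rw [hT, erase_eq_of_notMem (mt (hS p).mp hst)]

lemma opacityCore_eq_of_not_simplyTransparent (hG : IsMult G) (hG1 : G 1 = 1)
    (hfin : {p : ℕ | p.Prime ∧ IsBad G p}.Finite) (hp : p.Prime)
    (h : ¬ IsSimplyTransparent G p) : opacityCore G p = G p := by
  obtain ⟨N, hN, hpN, hGN, -, hT⟩ := exists_transpCond_eq hG hG1 hfin hp
  simpa [opacityCore, mu_prime hp, hT h, hGN] using hG.map_prime_pow_mul hp hN hpN 1

lemma opacityCore_eq_of_simplyTransparent (hG : IsMult G) (hG1 : G 1 = 1)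
    (hfin : {p : ℕ | p.Prime ∧ IsBad G p}.Finite) (hp : p.Prime)
    (h : IsSimplyTransparent G p) : opacityCore G p = G (p ^ ((trIdx G p).toNat + 1)) := by
  obtain ⟨N, hN, hpN, hGN, hT, -⟩ := exists_transpCond_eq hG hG1 hfin hp
  rw [opacityCore, mu_prime hp, hT h, ← mul_assoc, ← pow_succ',
    hG.map_prime_pow_mul hp hN hpN, hGN]
  ring

lemma opacityCore_eq_of_first_ne_one (hG : IsMult G) (hG1 : G 1 = 1)
    (hfin : {p : ℕ | p.Prime ∧ IsBad G p}.Finite) (hp : p.Prime) {t : ℕ}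
    (hone : ∀ k : ℕ, 1 ≤ k → k ≤ t → G (p ^ k) = 1) (hne : G (p ^ (t + 1)) ≠ 1) :
    opacityCore G p = G (p ^ (t + 1)) := by
  rcases Nat.eq_zero_or_pos t with rfl | ht
  · rw [zero_add, pow_one] at hne ⊢
    exact opacityCore_eq_of_not_simplyTransparent hG hG1 hfin hp fun h => hne h.2.1
  have hGp : G p = 1 := by simpa using hone 1 le_rfl ht
  have hst : IsSimplyTransparent G p :=
    ⟨hp, hGp, cmIndex_ne_top (k := t + 1) (by omega) (by rwa [hGp, one_pow])⟩
  rw [opacityCore_eq_of_simplyTransparent hG hG1 hfin hp hst, trIdx_eq hone hne, ENat.toNat_natCast]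

end Transparency

section LocalFactor

variable {g c ℓ : ℕ → ℂ} {T : ℝ → ℂ} {r : ℝ} {τ κ : ℂ} {m : ℕ}

/-- Two linearly independent rows `(g e, -g (e+1))` already force `T` to converge. -/
lemma eq_pow_or_tendsto (hr : 0 < r) (hg0 : g 0 = 1)
    (h : ∀ e, Tendsto (fun x => g e * T x - g (e + 1) * T (x / r)) atTop (nhds (ℓ e))) :
    (∀ e, g e = g 1 ^ e) ∨ ∃ τ, Tendsto T atTop (nhds τ) := by
  by_cases hgeo : ∀ e, g (e + 1) = g 1 * g e
  · left
    intro e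
    induction e with
    | zero => rw [hg0, pow_zero]
    | succ e ih => rw [hgeo, ih, pow_succ']
  right
  obtain ⟨e, he⟩ := not_forall.mp hgeo
  have hD : g (e + 1) - g 1 * g e ≠ 0 := sub_ne_zero.mpr he
  have hshift : Tendsto (fun x => T (x / r)) atTop
      (nhds ((g e * ℓ 0 - ℓ e) / (g (e + 1) - g 1 * g e))) := by
    refine ((((h 0).const_mul (g e)).sub (h e)).div_const _).congr fun x => ?_
    rw [hg0, zero_add, div_eq_iff hD]
    ring
  refine ⟨_, (hshift.comp (tendsto_id.atTop_mul_const hr)).congr fun y => ?_⟩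
  simp [mul_div_cancel_right₀ y hr.ne']

lemma sub_mul_eq_of_tendsto (hr : 0 < r)
    (h : ∀ e, Tendsto (fun x => g e * T x - g (e + 1) * T (x / r)) atTop (nhds (ℓ e)))
    (hT : Tendsto T atTop (nhds τ)) (e : ℕ) : (g e - g (e + 1)) * τ = ℓ e := by
  have hTr : Tendsto (fun x => T (x / r)) atTop (nhds τ) :=
    hT.comp (tendsto_id.atTop_div_const hr)
  rw [sub_mul]
  exact tendsto_nhds_unique ((hT.const_mul _).sub (hTr.const_mul _)) (h e)

lemma eq_pow_mul_of_eq_pow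
    (h : ∀ e, Tendsto (fun x => g e * T x - g (e + 1) * T (x / r)) atTop (nhds (ℓ e)))
    (hpow : ∀ e, g e = g 1 ^ e) (e : ℕ) : ℓ e = g 1 ^ e * ℓ 0 := by
  refine tendsto_nhds_unique (h e) (((h 0).const_mul (g 1 ^ e)).congr fun x => ?_)
  rw [hpow e, hpow (e + 1), hpow 0, zero_add, pow_zero, pow_succ]
  ring

lemma recovery_of_eq_pow (hlow : ∀ e < m, ℓ e = 0) (hhigh : ∀ K, ℓ (m + K) = κ * c K)
    (hκ : κ ≠ 0) (hc0 : c 0 = 1) (hgeo : ∀ e, ℓ e = g 1 ^ e * ℓ 0) :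
    m = 0 ∧ ∀ K, c K = g 1 ^ K := by
  have hℓm : ℓ m = κ := by simpa [hc0] using hhigh 0
  obtain rfl : m = 0 := by
    by_contra hm
    rw [hgeo, hlow 0 (by omega), mul_zero] at hℓm
    exact hκ hℓm.symm
  refine ⟨rfl, fun K => mul_left_cancel₀ hκ ?_⟩
  have hK := hhigh K
  rw [zero_add, hgeo, hℓm] at hK
  linear_combination -hK

lemma recovery_of_sub_mul_eq (hlow : ∀ e < m, ℓ e = 0) (hhigh : ∀ K, ℓ (m + K) = κ * c K)
    (hκ : κ ≠ 0) (hc0 : c 0 = 1) (hg0 : g 0 = 1) (hlim : ∀ e, (g e - g (e + 1)) * τ = ℓ e) :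
    (∀ k, 1 ≤ k → k ≤ m → g k = 1) ∧ g (m + 1) ≠ 1 ∧
      ∀ v, g (m + v) = g (m + 1) + (1 - g (m + 1)) * (1 - ∑ K ∈ range v, c K) := by
  have hℓm : ℓ m = κ := by simpa [hc0] using hhigh 0
  have hτ : τ ≠ 0 := by
    rintro rfl
    exact hκ (by rw [← hℓm, ← hlim, mul_zero])
  have hflat : ∀ e ≤ m, g e = 1 := by
    intro e
    induction e with
    | zero => exact fun _ => hg0
    | succ e ih =>
      intro he
      have hstep := hlim e
      rw [hlow e (by omega), ih (by omega)] at hstep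
      exact (sub_eq_zero.mp ((mul_eq_zero.mp hstep).resolve_right hτ)).symm
  have hgm1 : (1 - g (m + 1)) * τ = κ := by rw [← hflat m le_rfl, hlim, hℓm]
  have hstep : ∀ K, g (m + K) - g (m + (K + 1)) = (1 - g (m + 1)) * c K := fun K =>
    mul_right_cancel₀ hτ (by rw [← add_assoc, hlim, hhigh]; linear_combination (-c K) * hgm1)
  refine ⟨fun k _ hk => hflat k hk, fun h => hκ (by rw [← hgm1, h, sub_self, zero_mul]),
    fun v => ?_⟩
  have htel := sum_range_sub' (fun K => g (m + K)) v
  rw [sum_congr rfl fun K _ => hstep K, ← mul_sum, add_zero, hflat m le_rfl] at htel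
  linear_combination htel

end LocalFactor

theorem stmt_6_general (F : ℕ → ℂ) (aF : ℕ) (MF : ℕ → ℂ)
    (haF : 0 < aF) (hFaF : F aF ≠ 0)
    (hstd : ∀ a : ℕ, 0 < a →
      (aF ∣ a → F a = F aF * MF (a / aF)) ∧ (¬ aF ∣ a → F a = 0))
    (G : ℕ → ℂ) (hG : IsMult G)
    (hfin : {p : ℕ | p.Prime ∧ IsBad G p}.Finite)
    (hconv : ∀ a : ℕ, 0 < a → RTendsto G a (F a)) :
    ∀ p : ℕ, p.Prime → ∀ v : ℕ, 1 ≤ v →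
      G (p ^ (aF.factorization p + v)) =
        opacityCore G p + (1 - opacityCore G p) * canonCoeff MF (p ^ v) := by
  intro p hp v _
  obtain ⟨q, hq, hGq⟩ := exists_ne_zero_of_RTendsto (hconv aF haF) hFaF
  have hG1 : G 1 = 1 := hG.map_one hq hGq
  have hMF1 : MF 1 = 1 := by
    have h := (hstd aF haF).1 dvd_rfl
    rw [Nat.div_self haF] at h
    exact (mul_eq_left₀ hFaF).mp h.symm
  set m := aF.factorization p
  set b := aF / p ^ m
  have hb : 0 < b := Nat.ordCompl_pos p haF.ne'
  have haF_eq : aF = b * p ^ m := by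
    rw [mul_comm]
    exact (Nat.ordProj_mul_ordCompl_eq_self aF p).symm
  have hp0 : (0 : ℝ) < p := Nat.cast_pos.mpr hp.pos
  have hlim : ∀ e, Tendsto (fun x => G (p ^ e) * coprimeLS G b p x -
      G (p ^ (e + 1)) * coprimeLS G b p (x / p)) atTop
      (nhds (eratos F (b * p ^ e) / (b * p ^ e : ℕ))) := fun e =>
    (LTendsto_eratos hconv (Nat.mul_pos hb (pow_pos hp.pos e))).congr
      (LS_mul_prime_pow hG hp hb (Nat.not_dvd_ordCompl hp haF.ne') e)
  have hlow := fun e (he : e < m) => eratos_div_mul_prime_pow_of_lt hp hb haF_eq hstd he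
  have hhigh := eratos_div_mul_prime_pow_add hp hb haF_eq hstd
  have hκ : F aF / aF ≠ 0 := div_ne_zero hFaF (Nat.cast_ne_zero.mpr haF.ne')
  have hc0 : eratos MF (p ^ 0) / (p : ℂ) ^ 0 = 1 := by simp [eratos_one, hMF1]
  rw [canonCoeff_prime_pow MF hp v]
  rcases eq_pow_or_tendsto (g := fun e => G (p ^ e)) hp0 (by simpa using hG1) hlim with
    hpow | ⟨τ, hτ⟩
  · obtain ⟨hm0, hc⟩ := recovery_of_eq_pow hlow hhigh hκ hc0 (eq_pow_mul_of_eq_pow hlim hpow)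
    have hcm : ∀ k, G (p ^ k) = G p ^ k := by simpa using hpow
    have hH : opacityCore G p = G p := opacityCore_eq_of_not_simplyTransparent hG hG1 hfin hp
      fun hst => hst.2.2 (cmIndex_eq_top hcm)
    rw [hm0, zero_add, hH, hcm v, sum_congr rfl fun K _ => (hc K).trans (by rw [pow_one])]
    linear_combination (mul_neg_geom_sum (G p) v)
  · obtain ⟨hone, hne, hrec⟩ :=
      recovery_of_sub_mul_eq hlow hhigh hκ hc0 (by simpa using hG1)
        (sub_mul_eq_of_tendsto hp0 hlim hτ)
    rw [opacityCore_eq_of_first_ne_one hG hG1 hfin hp hone hne]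
    exact hrec v

/-- Explicit recovery of `G ∈ <F>_M` from its opacity core (Proposition 9.6). -/
theorem stmt_6 (F : ℕ → ℂ) (aF : ℕ) (MF : ℕ → ℂ)
    (haF : 0 < aF) (hFaF : F aF ≠ 0)
    (hmin : ∀ a : ℕ, 0 < a → a < aF → F a = 0)
    (hMF : IsMult MF)
    (hstd : ∀ a : ℕ, 0 < a →
      (aF ∣ a → F a = F aF * MF (a / aF)) ∧ (¬ aF ∣ a → F a = 0))
    (G : ℕ → ℂ) (hG : IsMult G)
    (hfin : {p : ℕ | p.Prime ∧ IsBad G p}.Finite)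
    (hconv : ∀ a : ℕ, 0 < a → RTendsto G a (F a)) :
    ∀ p : ℕ, p.Prime → ∀ v : ℕ, 1 ≤ v →
      G (p ^ (aF.factorization p + v)) =
        opacityCore G p + (1 - opacityCore G p) * canonCoeff MF (p ^ v) :=
  stmt_6_general F aF MF haF hFaF hstd G hG hfin hconv
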